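/- For every simple resource term s and every variable x, there are only finitely many pairs (t,T), with t a simple term and T a simple poly-term, such that s occurs with nonzero coefficient in the differential substitution t⟨T/x⟩. -/

import Mathlib

/-! If `s ∈ t⟨T/x⟩`, then `s` arises from `t` by replacing the occurrences of `x` by the
members of `T`; hence `t` and `T` are each no larger than `s`, and every variable name of
`t` and `T`, bound ones included, is `x` or a name of `s`. Bound names must be counted too,
since free variables alone do not bound the terms. Only finitely many terms and poly-terms
have bounded size over a finite set of names. -/

inductive RT : Type
  | var : ℕ → RT
  | lam : ℕ → RT → RT
  | app : RT → List RT → RT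

noncomputable instance : DecidableEq RT := Classical.decEq _

namespace Resource

mutual
def size : RT → ℕ
  | .var _ => 1
  | .lam _ s => 1 + size s
  | .app s S => 1 + size s + sizeP S
def sizeP : List RT → ℕ
  | [] => 0
  | t :: T => size t + sizeP T
end

mutual
def fv : RT → Finset ℕ
  | .var x => {x}
  | .lam x s => (fv s).erase x
  | .app s S => fv s ∪ fvP S
def fvP : List RT → Finset ℕ
  | [] => ∅
  | t :: T => fv t ∪ fvP T
end

mutual
def fc : RT → ℕ → ℕ
  | .var y, x => if y = x then 1 else 0
  | .lam y s, x => if y = x then 0 else fc s x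
  | .app s S, x => fc s x + fcP S x
def fcP : List RT → ℕ → ℕ
  | [], _ => 0
  | t :: T, x => fc t x + fcP T x
end

mutual
def subst : RT → ℕ → RT → RT
  | .var y, x, t => if y = x then t else .var y
  | .lam y s, x, t => if y = x then .lam y s else .lam y (subst s x t)
  | .app s S, x, t => .app (subst s x t) (substP S x t)
def substP : List RT → ℕ → RT → List RT
  | [], _, _ => []
  | u :: T, x, t => subst u x t :: substP T x t
end

def splits : List RT → List (List RT × List RT)
  | [] => [([], [])]
  | a :: l => (splits l).flatMap fun p => [(a :: p.1, p.2), (p.1, a :: p.2)]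

mutual
def dsubst : RT → ℕ → List RT → Multiset RT
  | .var y, x, S =>
      if y = x then (match S with | [t] => {t} | _ => 0)
      else if S.isEmpty then {RT.var y} else 0
  | .lam y s, x, S =>
      if y = x then (if S.isEmpty then {RT.lam y s} else 0)
      else (dsubst s x S).map (RT.lam y)
  | .app s T, x, S =>
      ((splits S).map fun p =>
        (dsubst s x p.1).bind fun s' =>
          (dsubstP T x p.2).map fun T' => RT.app s' T').sum
def dsubstP : List RT → ℕ → List RT → Multiset (List RT)
  | [], _, S => if S.isEmpty then {([] : List RT)} else 0
  | t :: T, x, S =>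
      ((splits S).map fun p =>
        (dsubst t x p.1).bind fun t' =>
          (dsubstP T x p.2).map fun T' => t' :: T').sum
end

mutual
inductive Red1 : RT → Multiset RT → Prop
  | beta (x : ℕ) (s : RT) (S : List RT) : Red1 (.app (.lam x s) S) (dsubst s x S)
  | lam (x : ℕ) {s : RT} {a : Multiset RT} : Red1 s a → Red1 (.lam x s) (a.map (RT.lam x))
  | appL {s : RT} {a : Multiset RT} (S : List RT) :
      Red1 s a → Red1 (.app s S) (a.map fun u => RT.app u S)
  | appR (s : RT) {S : List RT} {A : Multiset (List RT)} :
      Red1P S A → Red1 (.app s S) (A.map fun T => RT.app s T)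
inductive Red1P : List RT → Multiset (List RT) → Prop
  | head {t : RT} {b : Multiset RT} (T : List RT) :
      Red1 t b → Red1P (t :: T) (b.map fun u => u :: T)
  | tail (t : RT) {T : List RT} {B : Multiset (List RT)} :
      Red1P T B → Red1P (t :: T) (B.map fun T' => t :: T')
end

def NLift {α β : Type*} (ρ : α → Multiset β → Prop) (a : Multiset α) (b : Multiset β) : Prop :=
  ∃ l : List (α × Multiset β), (∀ p ∈ l, ρ p.1 p.2) ∧
    a = (l.map Prod.fst : List α) ∧ b = (l.map Prod.snd).sum

def Red1R (s : RT) (b : Multiset RT) : Prop := b = {s} ∨ Red1 s b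

def Red : Multiset RT → Multiset RT → Prop := Relation.TransGen (NLift Red1R)

def rle (t s : RT) : Prop := ∃ a, Red {s} a ∧ t ∈ a

def above (s : RT) : Set RT := {t | rle s t}

def Red1RP (S : List RT) (B : Multiset (List RT)) : Prop := B = {S} ∨ Red1P S B

def RedP : Multiset (List RT) → Multiset (List RT) → Prop := Relation.TransGen (NLift Red1RP)

def plep (T S : List RT) : Prop := ∃ A, RedP {S} A ∧ T ∈ A





def orth {I : Type*} (F : Set (Set I)) : Set (Set I) := {e' | ∀ e ∈ F, (e ∩ e').Finite}

structure FinSpace (I : Type*) where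
  F : Set (Set I)
  biorth : orth (orth F) ⊆ F

lemma subset_biorth {I : Type*} (G : Set (Set I)) : G ⊆ orth (orth G) := by
  intro e he g hg
  have := hg e he
  rwa [Set.inter_comm] at this

lemma orth_anti {I : Type*} {G H : Set (Set I)} (h : G ⊆ H) : orth H ⊆ orth G :=
  fun g hg e he => hg e (h he)

def FinSpace.ofOrth {I : Type*} (G : Set (Set I)) : FinSpace I :=
  ⟨orth G, orth_anti (subset_biorth G)⟩

lemma FinSpace.empty_mem {I : Type*} (X : FinSpace I) : ∅ ∈ X.F :=
  X.biorth (fun g _ => by simp)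

lemma FinSpace.mem_of_subset {I : Type*} (X : FinSpace I) {e f : Set I}
    (he : e ∈ X.F) (h : f ⊆ e) : f ∈ X.F := by
  refine X.biorth (fun g hg => ?_)
  exact ((hg e he).subset (fun x hx => ⟨h hx.2, hx.1⟩))

lemma FinSpace.union_mem {I : Type*} (X : FinSpace I) {e f : Set I}
    (he : e ∈ X.F) (hf : f ∈ X.F) : e ∪ f ∈ X.F := by
  refine X.biorth (fun g hg => ?_)
  have h1 := hg e he
  have h2 := hg f hf
  rw [Set.inter_comm] at h1 h2
  rw [Set.inter_union_distrib_left]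
  exact h1.union h2

def fsSub (k : Type*) [Field k] {I : Type*} (X : FinSpace I) : Submodule k (I → k) where
  carrier := {a | {s | a s ≠ 0} ∈ X.F}
  add_mem' := by
    intro a b ha hb
    refine X.mem_of_subset (X.union_mem ha hb) ?_
    intro s hs
    by_contra h
    simp only [Set.mem_union, Set.mem_setOf_eq, not_or, not_not] at h
    exact hs (by simp [Pi.add_apply, h.1, h.2])
  zero_mem' := by
    refine X.mem_of_subset X.empty_mem ?_
    intro s hs
    simp at hs
  smul_mem' := by
    intro c a ha
    refine X.mem_of_subset ha ?_
    intro s hs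
    by_contra h
    simp only [Set.mem_setOf_eq, not_not] at h
    exact hs (by simp [Pi.smul_apply, h])

def fsTop (k : Type*) [Field k] {I : Type*} (X : FinSpace I) :
    TopologicalSpace (fsSub k X) where
  IsOpen U := ∀ a ∈ U, ∃ e' ∈ orth X.F, ∀ b : fsSub k X, (∀ s ∈ e', b.1 s = a.1 s) → b ∈ U
  isOpen_univ := by
    intro a _
    exact ⟨∅, fun e _ => by simp, fun b _ => trivial⟩
  isOpen_inter := by
    rintro U V hU hV a ⟨haU, haV⟩
    obtain ⟨e₁, he₁, h₁⟩ := hU a haU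
    obtain ⟨e₂, he₂, h₂⟩ := hV a haV
    refine ⟨e₁ ∪ e₂, fun e he => ?_, fun b hb => ?_⟩
    · rw [Set.inter_union_distrib_left]
      exact (he₁ e he).union (he₂ e he)
    · exact ⟨h₁ b (fun s hs => hb s (Or.inl hs)), h₂ b (fun s hs => hb s (Or.inr hs))⟩
  isOpen_sUnion := by
    rintro 𝒮 h a ⟨U, hU, haU⟩
    obtain ⟨e', he', hb⟩ := h U hU a haU
    exact ⟨e', he', fun b hbs => ⟨U, hU, hb b hbs⟩⟩



def Sfin : Set (Set RT) := orth (Set.range above)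

def SfinSpace : FinSpace RT := FinSpace.ofOrth (Set.range above)

def SS : Set (Set RT) := {e' | ∀ ξ : Finset ℕ, {s ∈ e' | fv s ⊆ ξ}.Finite}

def Sfv : Set (Set RT) := orth (Set.range above ∪ SS)

def bang (e : Set RT) : Set (List RT) := {S | ∀ t ∈ S, t ∈ e}

def appSet (g : Set RT) (E : Set (List RT)) : Set RT :=
  {u | ∃ t ∈ g, ∃ S ∈ E, u = RT.app t S}

def lamSet (x : ℕ) (g : Set RT) : Set RT := {u | ∃ s ∈ g, u = RT.lam x s}

def appMany (g : Set RT) (Es : List (Set (List RT))) : Set RT := Es.foldl appSet g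

def dsubstSet (g : Set RT) (x : ℕ) (E : Set (List RT)) : Set RT :=
  {t | ∃ s ∈ g, ∃ S ∈ E, t ∈ dsubst s x S}

def IsDFS (W : Set RT) (F : Set (Set RT)) : Prop :=
  (∀ e ∈ F, e ⊆ W) ∧ ∀ e : Set RT, e ⊆ W → e ∈ orth (orth F) → e ∈ F

def SaturatedP (W : Set RT) (F : Set (Set RT)) : Prop :=
  (∀ (x : ℕ) (es : List (Set RT)), (∀ e ∈ es, e ∈ Sfv) →
      appMany {RT.var x} (es.map bang) ∈ F) ∧
  F ⊆ Sfv ∧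
  (∀ (x : ℕ) (g e : Set RT) (es : List (Set RT)), g ∈ Sfv → e ∈ Sfv →
      (∀ e' ∈ es, e' ∈ Sfv) →
      appMany (dsubstSet g x (bang e)) (es.map bang) ∈ F →
      appMany (appSet (lamSet x g) (bang e)) (es.map bang) ∈ F)

abbrev FP := Set RT × Set (Set RT)

def SatFP (X : FP) : Prop := IsDFS X.1 X.2 ∧ SaturatedP X.1 X.2

def implWeb (FX FY : Set (Set RT)) : Set RT :=
  {t | ∀ e ∈ FX, appSet {t} (bang e) ∈ FY}

def implF (FX FY : Set (Set RT)) : Set (Set RT) :=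
  {g | g ⊆ implWeb FX FY ∧ ∀ e ∈ FX, appSet g (bang e) ∈ FY}

def implFP (X Y : FP) : FP := (implWeb X.2 Y.2, implF X.2 Y.2)

def preimpl (e : Set RT) (f' : Set RT) : Set RT :=
  {t | (appSet {t} (bang e) ∩ f').Nonempty}

def pdsubstSet (f : Set RT) (l : List (ℕ × Set (List RT))) : Set RT :=
  l.foldl (fun g p => dsubstSet g p.1 p.2) f

inductive ALam (k : Type) : Type
  | var : ℕ → ALam k
  | lam : ℕ → ALam k → ALam k
  | app : ALam k → List (k × ALam k) → ALam k

variable {k : Type} [Field k]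

mutual
def taylor : ALam k → RT → k
  | .var x, .var y => if x = y then 1 else 0
  | .var _, _ => 0
  | .lam x M, .lam y s => if x = y then taylor M s else 0
  | .lam _ _, _ => 0
  | .app M Q, .app t T =>
      taylor M t * ((Nat.factorial T.length : ℕ) : k)⁻¹ * (T.map fun u => taylorQ Q u).prod
  | .app _ _, _ => 0
def taylorQ : List (k × ALam k) → RT → k
  | [], _ => 0
  | (α, N) :: Q, u => α * taylor N u + taylorQ Q u
end

mutual
inductive InShape : ALam k → RT → Prop
  | var (x : ℕ) : InShape (.var x) (.var x)
  | lam (x : ℕ) {M : ALam k} {s : RT} : InShape M s → InShape (.lam x M) (.lam x s)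
  | app {M : ALam k} {Q : List (k × ALam k)} {s : RT} {T : List RT} :
      InShape M s → (∀ u ∈ T, InShapeQ Q u) →
      InShape (.app M Q) (.app s T)
inductive InShapeQ : List (k × ALam k) → RT → Prop
  | head {α : k} {N : ALam k} (Q : List (k × ALam k)) {u : RT} :
      InShape N u → InShapeQ ((α, N) :: Q) u
  | tail (p : k × ALam k) {Q : List (k × ALam k)} {u : RT} :
      InShapeQ Q u → InShapeQ (p :: Q) u
end

inductive Ty : Type
  | var : ℕ → Ty
  | arrow : Ty → Ty → Ty
  | all : ℕ → Ty → Ty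

def tyFV : Ty → Finset ℕ
  | .var φ => {φ}
  | .arrow A B => tyFV A ∪ tyFV B
  | .all φ A => (tyFV A).erase φ

def substTy : Ty → ℕ → Ty → Ty
  | .var ψ, φ, B => if ψ = φ then B else .var ψ
  | .arrow A C, φ, B => .arrow (substTy A φ B) (substTy C φ B)
  | .all ψ A, φ, B => if ψ = φ then .all ψ A else .all ψ (substTy A φ B)

inductive HasTy : List (ℕ × Ty) → ALam k → Ty → Prop
  | var (Γ : List (ℕ × Ty)) (x : ℕ) (A : Ty) :
      List.lookup x Γ = some A → HasTy Γ (.var x) A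
  | abs {Γ : List (ℕ × Ty)} {x : ℕ} {M : ALam k} {A B : Ty} :
      HasTy ((x, A) :: Γ) M B → HasTy Γ (.lam x M) (.arrow A B)
  | app {Γ : List (ℕ × Ty)} {M : ALam k} {Q : List (k × ALam k)} {A B : Ty} :
      HasTy Γ M (.arrow A B) → (∀ p ∈ Q, HasTy Γ p.2 A) → HasTy Γ (.app M Q) B
  | inst {Γ : List (ℕ × Ty)} {M : ALam k} {φ : ℕ} {A : Ty} (B : Ty) :
      HasTy Γ M (.all φ A) → HasTy Γ M (substTy A φ B)
  | gen {Γ : List (ℕ × Ty)} {M : ALam k} {φ : ℕ} {A : Ty} :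
      HasTy Γ M A → (∀ p ∈ Γ, φ ∉ tyFV p.2) → HasTy Γ M (.all φ A)



def interp (I : ℕ → FP) : Ty → FP
  | .var φ => I φ
  | .arrow A B => implFP (interp I A) (interp I B)
  | .all φ A =>
      (⋂ (X : FP) (_ : SatFP X), (interp (Function.update I φ X) A).1,
       {e | (e ⊆ ⋂ (X : FP) (_ : SatFP X), (interp (Function.update I φ X) A).1) ∧
            ∀ X : FP, SatFP X → e ∈ (interp (Function.update I φ X) A).2})


mutual
def names : RT → Finset ℕ
  | .var y => {y}
  | .lam y t => insert y (names t)
  | .app t T => names t ∪ namesP T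
def namesP : List RT → Finset ℕ
  | [] => ∅
  | t :: T => names t ∪ namesP T
end

lemma size_pos : ∀ t : RT, 0 < size t
  | .var _ | .lam _ _ | .app _ _ => by simp [size]

lemma sizeP_eq_sum : ∀ T : List RT, sizeP T = (T.map size).sum
  | [] => rfl
  | t :: T => by simp [sizeP, sizeP_eq_sum T]

lemma mem_namesP {y : ℕ} : ∀ {T : List RT}, y ∈ namesP T ↔ ∃ t ∈ T, y ∈ names t
  | [] => by simp [namesP]
  | t :: T => by simp [namesP, mem_namesP]

lemma perm_append_of_mem_splits {S : List RT} {p : List RT × List RT} (hp : p ∈ splits S) :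
    S.Perm (p.1 ++ p.2) := by
  induction S generalizing p with
  | nil => simp_all [splits]
  | cons a l ih =>
    simp only [splits, List.mem_flatMap, List.mem_cons, List.not_mem_nil, or_false] at hp
    obtain ⟨q, hq, rfl | rfl⟩ := hp
    · exact (ih hq).cons a
    · exact ((ih hq).cons a).trans List.perm_middle.symm

lemma sizeP_of_mem_splits {S : List RT} {p : List RT × List RT} (hp : p ∈ splits S) :
    sizeP S = sizeP p.1 + sizeP p.2 := by
  simp [sizeP_eq_sum, ((perm_append_of_mem_splits hp).map size).sum_eq]

lemma namesP_of_mem_splits {S : List RT} {p : List RT × List RT} (hp : p ∈ splits S) :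
    namesP S = namesP p.1 ∪ namesP p.2 := by
  ext y
  simp [mem_namesP, (perm_append_of_mem_splits hp).mem_iff, or_and_right, exists_or]

lemma _root_.Multiset.mem_listSum {α : Type*} {L : List (Multiset α)} {a : α} :
    a ∈ L.sum ↔ ∃ m ∈ L, a ∈ m := by
  induction L <;> simp_all

lemma mem_dsubst_var {y x : ℕ} {s : RT} {S : List RT} :
    s ∈ dsubst (.var y) x S ↔ (y = x ∧ S = [s]) ∨ (y ≠ x ∧ S = [] ∧ s = .var y) := by
  by_cases hyx : y = x
  · rcases S with _ | ⟨u, _ | ⟨v, S⟩⟩ <;> simp [dsubst, hyx, eq_comm]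
  · cases S <;> simp [dsubst, hyx]

lemma mem_dsubst_lam {y x : ℕ} {u s : RT} {S : List RT} :
    s ∈ dsubst (.lam y u) x S ↔
      (y = x ∧ S = [] ∧ s = .lam y u) ∨ (y ≠ x ∧ ∃ u' ∈ dsubst u x S, s = .lam y u') := by
  by_cases hyx : y = x
  · cases S <;> simp [dsubst, hyx]
  · simp [dsubst, hyx, eq_comm]

lemma mem_dsubst_app {x : ℕ} {u s : RT} {U S : List RT} :
    s ∈ dsubst (.app u U) x S ↔ ∃ p ∈ splits S, ∃ u' ∈ dsubst u x p.1,
      ∃ U' ∈ dsubstP U x p.2, s = .app u' U' := by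
  simp [dsubst, Multiset.mem_listSum, eq_comm]

lemma mem_dsubstP_cons {x : ℕ} {u : RT} {U S T' : List RT} :
    T' ∈ dsubstP (u :: U) x S ↔ ∃ p ∈ splits S, ∃ u' ∈ dsubst u x p.1,
      ∃ U' ∈ dsubstP U x p.2, T' = u' :: U' := by
  simp [dsubstP, Multiset.mem_listSum, eq_comm]

lemma mem_dsubstP_nil {x : ℕ} {S T' : List RT} :
    T' ∈ dsubstP [] x S ↔ S = [] ∧ T' = [] := by
  cases S <;> simp [dsubstP]

mutual
lemma size_le_of_mem_dsubst {x : ℕ} {s : RT} :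
    ∀ {t : RT} {T : List RT}, s ∈ dsubst t x T → size t ≤ size s ∧ sizeP T ≤ size s
  | .var y, T, h => by
    obtain ⟨rfl, rfl⟩ | ⟨-, rfl, rfl⟩ := mem_dsubst_var.1 h
    · exact ⟨size_pos s, by simp [sizeP]⟩
    · simp [sizeP]
  | .lam y u, T, h => by
    obtain ⟨-, rfl, rfl⟩ | ⟨-, u', hu', rfl⟩ := mem_dsubst_lam.1 h
    · simp [sizeP]
    · have := size_le_of_mem_dsubst hu'
      simp only [size]
      omega
  | .app u U, T, h => by
    obtain ⟨p, hp, u', hu', U', hU', rfl⟩ := mem_dsubst_app.1 h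
    have := size_le_of_mem_dsubst hu'
    have := sizeP_le_of_mem_dsubstP hU'
    rw [sizeP_of_mem_splits hp]
    simp only [size]
    omega

lemma sizeP_le_of_mem_dsubstP {x : ℕ} {T' : List RT} :
    ∀ {T S : List RT}, T' ∈ dsubstP T x S → sizeP T ≤ sizeP T' ∧ sizeP S ≤ sizeP T'
  | [], S, h => by
    obtain ⟨rfl, rfl⟩ := mem_dsubstP_nil.1 h
    simp
  | u :: U, S, h => by
    obtain ⟨p, hp, u', hu', U', hU', rfl⟩ := mem_dsubstP_cons.1 h
    have := size_le_of_mem_dsubst hu'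
    have := sizeP_le_of_mem_dsubstP hU'
    rw [sizeP_of_mem_splits hp]
    simp only [sizeP]
    omega
end

mutual
lemma names_subset_of_mem_dsubst {x : ℕ} {s : RT} :
    ∀ {t : RT} {T : List RT}, s ∈ dsubst t x T →
      names t ⊆ insert x (names s) ∧ namesP T ⊆ names s
  | .var y, T, h => by
    obtain ⟨rfl, rfl⟩ | ⟨-, rfl, rfl⟩ := mem_dsubst_var.1 h
    · simp [names, namesP]
    · simp [names, namesP]
  | .lam y u, T, h => by
    obtain ⟨-, rfl, rfl⟩ | ⟨-, u', hu', rfl⟩ := mem_dsubst_lam.1 h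
    · simp [namesP]
    · obtain ⟨h₁, h₂⟩ := names_subset_of_mem_dsubst hu'
      simp only [names]
      constructor <;> grind
  | .app u U, T, h => by
    obtain ⟨p, hp, u', hu', U', hU', rfl⟩ := mem_dsubst_app.1 h
    obtain ⟨h₁, h₂⟩ := names_subset_of_mem_dsubst hu'
    obtain ⟨h₃, h₄⟩ := namesP_subset_of_mem_dsubstP hU'
    rw [namesP_of_mem_splits hp]
    simp only [names]
    constructor <;> grind

lemma namesP_subset_of_mem_dsubstP {x : ℕ} {T' : List RT} :
    ∀ {T S : List RT}, T' ∈ dsubstP T x S →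
      namesP T ⊆ insert x (namesP T') ∧ namesP S ⊆ namesP T'
  | [], S, h => by
    obtain ⟨rfl, rfl⟩ := mem_dsubstP_nil.1 h
    simp [namesP]
  | u :: U, S, h => by
    obtain ⟨p, hp, u', hu', U', hU', rfl⟩ := mem_dsubstP_cons.1 h
    obtain ⟨h₁, h₂⟩ := names_subset_of_mem_dsubst hu'
    obtain ⟨h₃, h₄⟩ := namesP_subset_of_mem_dsubstP hU'
    rw [namesP_of_mem_splits hp]
    simp only [namesP]
    constructor <;> grind
end

lemma finite_size_le_names_subset (ξ : Finset ℕ) (n : ℕ) :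
    {t : RT | size t ≤ n ∧ names t ⊆ ξ}.Finite ∧
      {T : List RT | sizeP T ≤ n ∧ namesP T ⊆ ξ}.Finite := by
  induction n with
  | zero =>
    refine ⟨Set.finite_empty.subset fun t ht => (size_pos t).ne' (Nat.le_zero.1 ht.1),
      (Set.finite_singleton []).subset ?_⟩
    rintro (_ | ⟨t, T⟩) ⟨hsize, -⟩
    · rfl
    · simp only [sizeP] at hsize
      exact absurd (size_pos t) (by omega)
  | succ n ih =>
    obtain ⟨hterms, hlists⟩ := ih
    have hterms' : {t : RT | size t ≤ n + 1 ∧ names t ⊆ ξ}.Finite := by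
      refine (((ξ.finite_toSet.image RT.var).union (ξ.finite_toSet.image2 RT.lam hterms)).union
        (hterms.image2 RT.app hlists)).subset ?_
      rintro (y | ⟨y, u⟩ | ⟨u, U⟩) ⟨hsize, hnames⟩ <;>
        simp only [size, names, Finset.singleton_subset_iff, Finset.insert_subset_iff,
          Finset.union_subset_iff] at hsize hnames
      · exact .inl (.inl ⟨y, hnames, rfl⟩)
      · exact .inl (.inr ⟨y, hnames.1, u, ⟨by omega, hnames.2⟩, rfl⟩)
      · exact .inr ⟨u, ⟨by omega, hnames.1⟩, U, ⟨by omega, hnames.2⟩, rfl⟩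
    refine ⟨hterms', ((Set.finite_singleton []).union (hterms'.image2 List.cons hlists)).subset ?_⟩
    rintro (_ | ⟨t, T⟩) ⟨hsize, hnames⟩
    · exact .inl rfl
    · simp only [sizeP, namesP, Finset.union_subset_iff] at hsize hnames
      exact .inr ⟨t, ⟨by omega, hnames.1⟩, T, ⟨by have := size_pos t; omega, hnames.2⟩, rfl⟩

theorem statement5 (s : RT) (x : ℕ) :
    {p : RT × List RT | s ∈ dsubst p.1 x p.2}.Finite := by
  obtain ⟨hterms, hlists⟩ := finite_size_le_names_subset (insert x (names s)) (size s)
  refine (hterms.prod hlists).subset fun ⟨t, T⟩ h => ?_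
  obtain ⟨hsize_t, hsize_T⟩ := size_le_of_mem_dsubst h
  obtain ⟨hnames_t, hnames_T⟩ := names_subset_of_mem_dsubst h
  exact ⟨⟨hsize_t, hnames_t⟩, hsize_T, hnames_T.trans (Finset.subset_insert x _)⟩

end Resource
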